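/- Let π = (n_1,…,n_m) (m ≥ 2) be a partition of n and let 0 < ρ ≤ 1. Then there exist constants η_{π,ρ} and η̃_{n,ρ}, depending only on (π,ρ) and on (n,ρ) respectively, with 0 ≤ η_{π,ρ} < η̃_{n,ρ} < 1, such that for every ordering O ∈ B_c^(m), every real symmetric n×n matrix A, and every matrix A' obtained from A by one sweep of the cyclic block Jacobi method defined by the pivot strategy I_O in which all transformation matrices belong to the class UBC_π(ρ), one has S(A')² ≤ η_{π,ρ}·S(A)². -/

import Mathlib

namespace BlockJacobi

open scoped BigOperators

attribute [local instance] Classical.propDecidable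

noncomputable section

/-- Offset (starting index) of block `r` for the partition `c`. -/
def off (c : ℕ → ℕ) (r : ℕ) : ℕ := ∑ k ∈ Finset.range r, c k

/-- `t` belongs to block `r`. -/
def inBlk (c : ℕ → ℕ) (r t : ℕ) : Prop := off c r ≤ t ∧ t < off c r + c r

/-- `s` and `t` belong to the same block (among the first `m` blocks). -/
def sameBlk (c : ℕ → ℕ) (m s t : ℕ) : Prop := ∃ r, r < m ∧ inBlk c r s ∧ inBlk c r t

/-- `t` belongs to the pivot zone: block `i` or block `j`. -/
def inPiv (c : ℕ → ℕ) (i j t : ℕ) : Prop := inBlk c i t ∨ inBlk c j t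

/-- `(c, m)` is a partition of `n` into `m` blocks (0-based blocks `0,…,m-1`). -/
def IsPartition (n m : ℕ) (c : ℕ → ℕ) : Prop :=
  2 ≤ m ∧ (∀ i < m, 1 ≤ c i) ∧ ∑ i ∈ Finset.range m, c i = n

/-- elementary block matrix with (0-based) pivot pair `(i,j)`. -/
def IsElem {n : ℕ} (c : ℕ → ℕ) (i j : ℕ) (U : Matrix (Fin n) (Fin n) ℝ) : Prop :=
  ∀ s t : Fin n, ¬(inPiv c i j (s : ℕ) ∧ inPiv c i j (t : ℕ)) →
    U s t = if s = t then 1 else 0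

/-- orthogonality. -/
def Orth {n : ℕ} (U : Matrix (Fin n) (Fin n) ℝ) : Prop := U.transpose * U = 1

/-- Euclidean norm of a vector. -/
def enorm {ι : Type*} [Fintype ι] (x : ι → ℝ) : ℝ := Real.sqrt (∑ i, x i ^ 2)

/-- smallest singular value of the `(r,r)` diagonal block of `U`. -/
def sigmaMinBlk {n : ℕ} (c : ℕ → ℕ) (r : ℕ) (U : Matrix (Fin n) (Fin n) ℝ) : ℝ :=
  sInf { v : ℝ | ∃ x : Fin n → ℝ,
    (∀ t : Fin n, ¬ inBlk c r (t : ℕ) → x t = 0) ∧ enorm x = 1 ∧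
    enorm (fun t : Fin n => if inBlk c r (t : ℕ) then U.mulVec x t else 0) = v }

/-- the constant `γ_{ij}` of the UBC class. -/
def gammaUBC (c : ℕ → ℕ) (i j : ℕ) : ℝ :=
  3 / Real.sqrt (((4 : ℝ) ^ c i + 6 * (c j : ℝ) - 1) * ((c j : ℝ) + 1))

/-- `U` is in the UBC class with pivot pair `(i,j)`: block structure given by `cs`,
`γ`-bound computed from the partition `cg`. -/
def IsUBC2 {n : ℕ} (cs cg : ℕ → ℕ) (ρ : ℝ) (i j : ℕ) (U : Matrix (Fin n) (Fin n) ℝ) : Prop :=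
  IsElem cs i j U ∧ Orth U ∧ sigmaMinBlk cs i U = sigmaMinBlk cs j U ∧
    ρ * gammaUBC cg i j ≤ sigmaMinBlk cs i U

/-- `U ∈ UBC_π(ρ)` with pivot pair `(i,j)`. -/
def IsUBC {n : ℕ} (c : ℕ → ℕ) (ρ : ℝ) (i j : ℕ) (U : Matrix (Fin n) (Fin n) ℝ) : Prop :=
  IsUBC2 c c ρ i j U

/-- the `(i,j)` pivot submatrix of `A` is diagonal. -/
def PivDiag {n : ℕ} (c : ℕ → ℕ) (i j : ℕ) (A : Matrix (Fin n) (Fin n) ℝ) : Prop :=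
  ∀ s t : Fin n, s ≠ t → inPiv c i j (s : ℕ) → inPiv c i j (t : ℕ) → A s t = 0

/-- square of the off-norm `S(A)`. -/
def offSq {n : ℕ} (A : Matrix (Fin n) (Fin n) ℝ) : ℝ :=
  ∑ s : Fin n, ∑ t : Fin n, if (s : ℕ) < (t : ℕ) then A s t ^ 2 else 0

/-- square of the off-norm of the `(i,j)` pivot submatrix of `A`. -/
def offSqPiv {n : ℕ} (c : ℕ → ℕ) (i j : ℕ) (A : Matrix (Fin n) (Fin n) ℝ) : ℝ :=
  ∑ s : Fin n, ∑ t : Fin n,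
    if (s : ℕ) < (t : ℕ) ∧ inPiv c i j (s : ℕ) ∧ inPiv c i j (t : ℕ) then A s t ^ 2 else 0

/-- Frobenius norm. -/
def frob {n : ℕ} (A : Matrix (Fin n) (Fin n) ℝ) : ℝ :=
  Real.sqrt (∑ s : Fin n, ∑ t : Fin n, A s t ^ 2)

/-- One sweep of the block Jacobi method along the pivot list `L`; block structure from
`cs`, UBC bound computed from the partition `cg`. -/
def Sweep2 {n : ℕ} (cs cg : ℕ → ℕ) (ρ : ℝ) (L : List (ℕ × ℕ))
    (A A' : Matrix (Fin n) (Fin n) ℝ) : Prop :=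
  ∃ B : ℕ → Matrix (Fin n) (Fin n) ℝ,
    B 0 = A ∧ B L.length = A' ∧
    ∀ (k : ℕ) (hk : k < L.length),
      ∃ U : Matrix (Fin n) (Fin n) ℝ,
        IsUBC2 cs cg ρ (L.get ⟨k, hk⟩).1 (L.get ⟨k, hk⟩).2 U ∧
        B (k + 1) = U.transpose * B k * U ∧
        PivDiag cs (L.get ⟨k, hk⟩).1 (L.get ⟨k, hk⟩).2 (B (k + 1))

/-- One sweep of the block Jacobi method with `UBC_π(ρ)` transformations. -/
def Sweep {n : ℕ} (c : ℕ → ℕ) (ρ : ℝ) (L : List (ℕ × ℕ))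
    (A A' : Matrix (Fin n) (Fin n) ℝ) : Prop :=
  Sweep2 c c ρ L A A'

/-- `L ∈ O(P_m)` (0-based pairs). -/
def SeqOn (m : ℕ) (L : List (ℕ × ℕ)) : Prop :=
  (∀ p ∈ L, p.1 < p.2 ∧ p.2 < m) ∧ ∀ i j : ℕ, i < j → j < m → (i, j) ∈ L

/-- `L ∈ O(S)` for `S ⊆ P_m`. -/
def SeqOnSet (S : Set (ℕ × ℕ)) (L : List (ℕ × ℕ)) : Prop :=
  (∀ p ∈ L, p ∈ S) ∧ ∀ p ∈ S, p ∈ L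

/-- the class `B_c^(m)` of column-wise orderings (0-based). -/
def memBc (m : ℕ) (L : List (ℕ × ℕ)) : Prop :=
  ∃ τ : ℕ → ℕ → ℕ,
    (∀ j, Set.BijOn (τ j) (Set.Iio j) (Set.Iio j)) ∧
    L = (List.range' 1 (m - 1)).flatMap fun j => (List.range j).map fun a => (τ j a, j)

/-- the class `B_r^(m)` of row-wise orderings (0-based). -/
def memBr (m : ℕ) (L : List (ℕ × ℕ)) : Prop :=
  ∃ σ : ℕ → ℕ → ℕ,
    (∀ i, Set.BijOn (σ i) (Set.Ico (i + 1) m) (Set.Ico (i + 1) m)) ∧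
    L = ((List.range (m - 1)).reverse).flatMap fun i =>
      (List.range' (i + 1) (m - 1 - i)).map fun b => (i, σ i b)

/-- the class `B_sp^(m)` of serial orderings with permutations. -/
def memBsp (m : ℕ) (L : List (ℕ × ℕ)) : Prop :=
  memBc m L ∨ memBc m L.reverse ∨ memBr m L ∨ memBr m L.reverse

/-- the quasi-cyclic class `B̄_c^(m)`. -/
def memBcQ (m : ℕ) (L : List (ℕ × ℕ)) : Prop :=
  ∃ (τ : ℕ → ℕ → ℕ) (E : ℕ → List (ℕ × ℕ)),
    (∀ j, Set.BijOn (τ j) (Set.Iio j) (Set.Iio j)) ∧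
    (∀ j, ∀ p ∈ E j, p.1 < p.2 ∧ p.2 ≤ j) ∧
    L = (List.range' 1 (m - 1)).flatMap fun j =>
      ((List.range j).map fun a => (τ j a, j)) ++ (if j = 1 then [] else E j)

/-- one admissible transposition (on lists of `α`'s carrying pairs via `pr`). -/
def AdjSwapG {α : Type*} (pr : α → ℕ × ℕ) (L L' : List α) : Prop :=
  ∃ (l₁ l₂ : List α) (a b : α),
    ({(pr a).1, (pr a).2} ∩ {(pr b).1, (pr b).2} : Set ℕ) = ∅ ∧
    L = l₁ ++ a :: b :: l₂ ∧ L' = l₁ ++ b :: a :: l₂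

/-- equivalence (finitely many admissible transpositions). -/
def EquivG {α : Type*} (pr : α → ℕ × ℕ) : List α → List α → Prop :=
  Relation.ReflTransGen (AdjSwapG pr)

/-- shift-equivalence. -/
def ShiftG {α : Type*} (L L' : List α) : Prop :=
  ∃ l₁ l₂ : List α, L = l₁ ++ l₂ ∧ L' = l₂ ++ l₁

/-- weak equivalence. -/
def WeakG {α : Type*} (pr : α → ℕ × ℕ) : List α → List α → Prop :=
  Relation.ReflTransGen fun X Y => EquivG pr X Y ∨ ShiftG X Y

/-- equivalence of pivot sequences. -/
def PEquivL : List (ℕ × ℕ) → List (ℕ × ℕ) → Prop := EquivG id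

/-- shift-equivalence of pivot sequences. -/
def ShiftEq : List (ℕ × ℕ) → List (ℕ × ℕ) → Prop := ShiftG

/-- weak equivalence of pivot sequences. -/
def WeakEq : List (ℕ × ℕ) → List (ℕ × ℕ) → Prop := WeakG id

/-- weak equivalence realized by a chain containing exactly `d` shift-equivalent
adjacent pairs (all other adjacent pairs being equivalent). -/
def WeakChainD (d : ℕ) (L L' : List (ℕ × ℕ)) : Prop :=
  ∃ (r : ℕ) (cs : ℕ → List (ℕ × ℕ)) (s : Finset ℕ),
    cs 0 = L ∧ cs r = L' ∧ s.card = d ∧ (∀ k ∈ s, k < r) ∧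
    ∀ k < r, if k ∈ s then ShiftEq (cs k) (cs (k + 1)) else PEquivL (cs k) (cs (k + 1))

/-- `q` is a permutation of `{0,…,m-1}`. -/
def IsPermOn (m : ℕ) (q : ℕ → ℕ) : Prop := Set.BijOn q (Set.Iio m) (Set.Iio m)

/-- `O(q)`: apply a permutation to all pairs of the sequence. -/
def pApply (q : ℕ → ℕ) (L : List (ℕ × ℕ)) : List (ℕ × ℕ) :=
  L.map fun p => if q p.1 < q p.2 then (q p.1, q p.2) else (q p.2, q p.1)

/-- `compSeq q t = q_t ∘ q_{t-1} ∘ ⋯ ∘ q_1`. -/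
def compSeq (q : ℕ → ℕ → ℕ) : ℕ → ℕ → ℕ
  | 0 => id
  | t + 1 => q (t + 1) ∘ compSeq q t

/-- the class `B_spg^(m)`. -/
def memBspg (m : ℕ) (L : List (ℕ × ℕ)) : Prop :=
  ∃ L' L'' : List (ℕ × ℕ), memBsp m L'' ∧
    ((∃ q, IsPermOn m q ∧ L' = pApply q L) ∧ PEquivL L' L'' ∨
      PEquivL L L' ∧ ∃ q, IsPermOn m q ∧ L'' = pApply q L')

/-- the class `B_sg^(m)` of generalized serial orderings. -/
def memBsg (m : ℕ) (L : List (ℕ × ℕ)) : Prop :=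
  ∃ L' L'' : List (ℕ × ℕ), memBsp m L'' ∧
    ((∃ q, IsPermOn m q ∧ L' = pApply q L) ∧ WeakEq L' L'' ∨
      WeakEq L L' ∧ ∃ q, IsPermOn m q ∧ L'' = pApply q L')

/-- index set of the entries of the off-diagonal blocks in the upper triangle;
it has cardinality `K`. -/
def OffI (n m : ℕ) (c : ℕ → ℕ) : Type :=
  { p : Fin n × Fin n // (p.1 : ℕ) < (p.2 : ℕ) ∧ ¬ sameBlk c m (p.1 : ℕ) (p.2 : ℕ) }

instance (n m : ℕ) (c : ℕ → ℕ) : Fintype (OffI n m c) := by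
  unfold OffI; exact Subtype.fintype _

instance (n m : ℕ) (c : ℕ → ℕ) : DecidableEq (OffI n m c) := Classical.decEq _

/-- `vec_{π,0}⁻¹` : the symmetric matrix with zero diagonal blocks built from a vector. -/
def symOf {n m : ℕ} {c : ℕ → ℕ} (a : OffI n m c → ℝ) : Matrix (Fin n) (Fin n) ℝ :=
  fun s t =>
    if h : (s : ℕ) < (t : ℕ) ∧ ¬ sameBlk c m (s : ℕ) (t : ℕ) then a ⟨(s, t), h⟩
    else if h' : (t : ℕ) < (s : ℕ) ∧ ¬ sameBlk c m (t : ℕ) (s : ℕ) then a ⟨(t, s), h'⟩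
    else 0

/-- `N_{ij}` : set the pivot submatrix to zero. -/
def nij {n : ℕ} (c : ℕ → ℕ) (i j : ℕ) (M : Matrix (Fin n) (Fin n) ℝ) :
    Matrix (Fin n) (Fin n) ℝ :=
  fun s t => if inPiv c i j (s : ℕ) ∧ inPiv c i j (t : ℕ) then 0 else M s t

/-- the block Jacobi annihilator `R_{ij}(Û)` (as a `K×K` matrix), parametrized by the
full elementary block matrix `U` with pivot pair `(i,j)` and pivot submatrix `Û`. -/
def annih (n m : ℕ) (c : ℕ → ℕ) (i j : ℕ) (U : Matrix (Fin n) (Fin n) ℝ) :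
    Matrix (OffI n m c) (OffI n m c) ℝ :=
  fun p q => nij c i j (U.transpose * symOf (Pi.single q (1 : ℝ)) * U) p.1.1 p.1.2

/-- the class `I_{ij}` of block Jacobi annihilators. -/
def Iij (n m : ℕ) (c : ℕ → ℕ) (i j : ℕ) : Set (Matrix (OffI n m c) (OffI n m c) ℝ) :=
  { R | ∃ U : Matrix (Fin n) (Fin n) ℝ, IsElem c i j U ∧ Orth U ∧ R = annih n m c i j U }

/-- the class `I_{ij}^{UBC(ρ)}`. -/
def IijUBC (n m : ℕ) (c : ℕ → ℕ) (ρ : ℝ) (i j : ℕ) :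
    Set (Matrix (OffI n m c) (OffI n m c) ℝ) :=
  { R | ∃ U : Matrix (Fin n) (Fin n) ℝ, IsUBC c ρ i j U ∧ R = annih n m c i j U }

/-- the class `J_O^{UBC_π(ρ)}` of block Jacobi operators. -/
def JopUBC (n m : ℕ) (c : ℕ → ℕ) (ρ : ℝ) (L : List (ℕ × ℕ)) :
    Set (Matrix (OffI n m c) (OffI n m c) ℝ) :=
  { J | ∃ R : ℕ → Matrix (OffI n m c) (OffI n m c) ℝ,
      (∀ (k : ℕ) (hk : k < L.length),
        R k ∈ IijUBC n m c ρ (L.get ⟨k, hk⟩).1 (L.get ⟨k, hk⟩).2) ∧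
      J = (((List.range L.length).reverse).map R).prod }

/-- spectral norm (operator 2-norm). -/
def specNorm {ι : Type*} [Fintype ι] (M : Matrix ι ι ℝ) : ℝ :=
  sSup { v : ℝ | ∃ x : ι → ℝ, enorm x = 1 ∧ enorm (M.mulVec x) = v }

/-- spectral radius. -/
def specRad {ι : Type*} [Fintype ι] (M : Matrix ι ι ℝ) : ℝ :=
  sSup { v : ℝ | ∃ (μ : ℂ) (x : ι → ℂ), x ≠ 0 ∧
    (M.map (fun r : ℝ => (r : ℂ))).mulVec x = μ • x ∧ v = ‖μ‖ }

/-- product `R_{T-1} ⋯ R_1 R_0` of a decorated pivot list. -/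
def prodD {n m : ℕ} {c : ℕ → ℕ}
    (L : List ((ℕ × ℕ) × Matrix (OffI n m c) (OffI n m c) ℝ)) :
    Matrix (OffI n m c) (OffI n m c) ℝ :=
  ((L.map Prod.snd).reverse).prod

/-- plane (Givens) rotation in the `(i,j)` coordinate plane. -/
def rotM (n : ℕ) (i j : ℕ) (φ : ℝ) : Matrix (Fin n) (Fin n) ℝ :=
  fun s t =>
    if (s : ℕ) = i ∧ (t : ℕ) = i then Real.cos φ
    else if (s : ℕ) = j ∧ (t : ℕ) = j then Real.cos φ
    else if (s : ℕ) = i ∧ (t : ℕ) = j then - Real.sin φ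
    else if (s : ℕ) = j ∧ (t : ℕ) = i then Real.sin φ
    else if s = t then 1 else 0

/-- One sweep of the scalar (element-wise) cyclic Jacobi method with rotation
angles in `[-π/4, π/4]`. -/
def ScalarSweep {n : ℕ} (L : List (ℕ × ℕ)) (A A' : Matrix (Fin n) (Fin n) ℝ) : Prop :=
  ∃ (B : ℕ → Matrix (Fin n) (Fin n) ℝ) (φ : ℕ → ℝ),
    B 0 = A ∧ B L.length = A' ∧
    ∀ (k : ℕ) (hk : k < L.length),
      |φ k| ≤ Real.pi / 4 ∧
      B (k + 1) =
        (rotM n (L.get ⟨k, hk⟩).1 (L.get ⟨k, hk⟩).2 (φ k)).transpose * B k *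
          rotM n (L.get ⟨k, hk⟩).1 (L.get ⟨k, hk⟩).2 (φ k) ∧
      ∀ s t : Fin n, (s : ℕ) = (L.get ⟨k, hk⟩).1 → (t : ℕ) = (L.get ⟨k, hk⟩).2 →
        B (k + 1) s t = 0

/-- `k` concatenated copies of a list. -/
def iterList {α : Type*} : ℕ → List α → List α
  | 0, _ => []
  | k + 1, L => L ++ iterList k L

/-!
Every step lowers `S²` by half the off-diagonal mass of its pivot submatrix, so with
`D = S(A)² - S(A')²` each pivot submatrix met during the sweep carries off-diagonal mass at most
`2D`. A diagonal block is untouched until the first step involving it, which bounds its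
off-diagonal mass by `2D`. For the off-diagonal blocks `(r, j)`, `r < j`: the total mass of block
column `j` above the diagonal is conserved by the steps of the earlier columns, and while column
`j` is processed the bound `σ_min(U_jj) ≥ σ` forces every block `(r, j)` either to be annihilated
by its own step or to keep a `σ²/2` fraction of its mass, up to mass moved in from the blocks
among the rows, which itself at most doubles per step. Induction over the columns bounds
`S(A)²` by `C·D`, where `C` depends only on `n` and `σ = ρ·γ`, `γ` being the smallest value of
`γ_ij` at `n_i = n_j = n`, a lower bound for every `γ_ij`. Hence `S(A')² ≤ (1 - 1/C)·S(A)²`.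
-/

open Finset Matrix

variable {n : ℕ} {c : ℕ → ℕ}

lemma off_mono (c : ℕ → ℕ) : Monotone (off c) := fun _ _ h =>
  sum_le_sum_of_subset (range_subset_range.2 h)

lemma off_succ (c : ℕ → ℕ) (r : ℕ) : off c (r + 1) = off c r + c r := sum_range_succ c r

lemma lt_of_inBlk_of_lt {r s a b : ℕ} (hrs : r < s) (ha : inBlk c r a) (hb : inBlk c s b) :
    a < b := by
  have := off_succ c r ▸ off_mono c hrs
  have := ha.2
  have := hb.1
  omega

lemma inBlk_unique {r s t : ℕ} (hr : inBlk c r t) (hs : inBlk c s t) : r = s := by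
  by_contra h
  rcases Nat.lt_or_gt_of_ne h with h | h
  · exact lt_irrefl t (lt_of_inBlk_of_lt h hr hs)
  · exact lt_irrefl t (lt_of_inBlk_of_lt h hs hr)

lemma exists_inBlk {m t : ℕ} (ht : t < off c m) : ∃ r < m, inBlk c r t := by
  induction m with
  | zero => simp [off] at ht
  | succ m ih =>
    rcases Nat.lt_or_ge t (off c m) with h | h
    · obtain ⟨r, hr, hb⟩ := ih h
      exact ⟨r, by omega, hb⟩
    · exact ⟨m, by omega, h, off_succ c m ▸ ht⟩

lemma IsPartition.block_le {m : ℕ} (h : IsPartition n m c) {i : ℕ} (hi : i < m) : c i ≤ n := by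
  rw [← h.2.2]
  exact single_le_sum (fun _ _ => Nat.zero_le _) (mem_range.2 hi)

lemma IsPartition.numBlocks_le {m : ℕ} (h : IsPartition n m c) : m ≤ n := by
  simpa [← h.2.2] using card_nsmul_le_sum (range m) c 1 fun i hi => h.2.1 i (mem_range.1 hi)

def blk (n : ℕ) (c : ℕ → ℕ) (r : ℕ) : Finset (Fin n) := univ.filter fun a => inBlk c r a

def piv (n : ℕ) (c : ℕ → ℕ) (i j : ℕ) : Finset (Fin n) := blk n c i ∪ blk n c j

@[simp] lemma mem_blk {r : ℕ} {a : Fin n} : a ∈ blk n c r ↔ inBlk c r a := by simp [blk]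

@[simp] lemma mem_piv {i j : ℕ} {a : Fin n} : a ∈ piv n c i j ↔ inPiv c i j a := by
  simp [piv, inPiv]

lemma disjoint_blk {r s : ℕ} (h : r ≠ s) : Disjoint (blk n c r) (blk n c s) :=
  disjoint_left.2 fun _ ha hb => h (inBlk_unique (mem_blk.1 ha) (mem_blk.1 hb))

lemma not_inPiv_of_inBlk {i j r : ℕ} {a : ℕ} (ha : inBlk c r a) (hri : r ≠ i) (hrj : r ≠ j) :
    ¬ inPiv c i j a := by
  rintro (h | h)
  · exact hri (inBlk_unique ha h)
  · exact hrj (inBlk_unique ha h)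

lemma sum_eq_sum_blk {m : ℕ} (hm : off c m = n) (f : Fin n → ℝ) :
    ∑ a, f a = ∑ r ∈ range m, ∑ a ∈ blk n c r, f a := by
  have hU : (univ : Finset (Fin n)) = (range m).biUnion (blk n c) := by
    ext t
    obtain ⟨r, hr, ht⟩ := exists_inBlk (c := c) (m := m) (t := t) (by rw [hm]; exact t.2)
    simpa using ⟨r, hr, ht⟩
  rw [hU, sum_biUnion fun r _ s _ hrs => disjoint_blk hrs]

/-- `‖M_rs‖_F²` -/
def blockMass (c : ℕ → ℕ) (r s : ℕ) (M : Matrix (Fin n) (Fin n) ℝ) : ℝ :=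
  ∑ a ∈ blk n c r, ∑ b ∈ blk n c s, M a b ^ 2

def blockUpperMass (c : ℕ → ℕ) (r : ℕ) (M : Matrix (Fin n) (Fin n) ℝ) : ℝ :=
  ∑ a ∈ blk n c r, ∑ b ∈ blk n c r, if (a : ℕ) < b then M a b ^ 2 else 0

def offMassOn (s : Finset (Fin n)) (M : Matrix (Fin n) (Fin n) ℝ) : ℝ :=
  ∑ a ∈ s, ∑ b ∈ s, if a = b then 0 else M a b ^ 2

lemma blockMass_nonneg (c : ℕ → ℕ) (r s : ℕ) (M : Matrix (Fin n) (Fin n) ℝ) :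
    0 ≤ blockMass c r s M := by
  unfold blockMass; positivity

lemma offMassOn_nonneg (s : Finset (Fin n)) (M : Matrix (Fin n) (Fin n) ℝ) :
    0 ≤ offMassOn s M :=
  sum_nonneg fun _ _ => sum_nonneg fun _ _ => by split_ifs <;> positivity

lemma blockMass_comm {M : Matrix (Fin n) (Fin n) ℝ} (hM : M.IsSymm) (r s : ℕ) :
    blockMass c r s M = blockMass c s r M := by
  rw [blockMass, sum_comm]
  simp only [hM.apply, blockMass]

lemma blockMass_eq_zero_of_pivDiag {i j : ℕ} (hij : i ≠ j) {M : Matrix (Fin n) (Fin n) ℝ}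
    (hM : PivDiag c i j M) : blockMass c i j M = 0 := by
  refine sum_eq_zero fun a ha => sum_eq_zero fun b hb => ?_
  rw [mem_blk] at ha hb
  rw [hM a b (fun e => hij (inBlk_unique ha (e ▸ hb))) (Or.inl ha) (Or.inr hb)]
  norm_num

lemma sum_sum_ite_le_offMassOn {s t u : Finset (Fin n)} (hs : s ⊆ u) (ht : t ⊆ u)
    (M : Matrix (Fin n) (Fin n) ℝ) :
    ∑ a ∈ s, ∑ b ∈ t, (if a = b then 0 else M a b ^ 2) ≤ offMassOn u M := by
  have hnn : ∀ a b : Fin n, 0 ≤ if a = b then (0 : ℝ) else M a b ^ 2 := fun _ _ => by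
    split_ifs <;> positivity
  calc _ ≤ ∑ a ∈ s, ∑ b ∈ u, (if a = b then 0 else M a b ^ 2) :=
        sum_le_sum fun a _ => sum_le_sum_of_subset_of_nonneg ht fun b _ _ => hnn a b
    _ ≤ _ := sum_le_sum_of_subset_of_nonneg hs fun a _ _ => sum_nonneg fun b _ => hnn a b

lemma blockMass_le_offMassOn_piv {i j : ℕ} (hij : i ≠ j) (M : Matrix (Fin n) (Fin n) ℝ) :
    blockMass c i j M ≤ offMassOn (piv n c i j) M := by
  refine le_of_eq_of_le (sum_congr rfl fun a ha => sum_congr rfl fun b hb => ?_)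
    (sum_sum_ite_le_offMassOn subset_union_left subset_union_right M)
  rw [if_neg fun (e : a = b) => disjoint_left.1 (disjoint_blk hij) ha (e ▸ hb)]

lemma blockUpperMass_le_offMassOn_piv {i j r : ℕ} (hr : r = i ∨ r = j)
    (M : Matrix (Fin n) (Fin n) ℝ) : blockUpperMass c r M ≤ offMassOn (piv n c i j) M := by
  have hsub : blk n c r ⊆ piv n c i j := by
    rcases hr with rfl | rfl
    exacts [subset_union_left, subset_union_right]
  refine le_trans (sum_le_sum fun a _ => sum_le_sum fun b _ => ?_)
    (sum_sum_ite_le_offMassOn hsub hsub M)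
  split_ifs with h1 h2 <;> first | positivity | (subst h2; omega) | rfl

lemma offSq_eq_sum_blockMass {m : ℕ} (hm : off c m = n) (A : Matrix (Fin n) (Fin n) ℝ) :
    offSq A = ∑ j ∈ range m, ∑ r ∈ range j, blockMass c r j A
      + ∑ r ∈ range m, blockUpperMass c r A := by
  have hblock : ∀ r s, ∑ a ∈ blk n c r, ∑ b ∈ blk n c s,
      (if (a : ℕ) < b then A a b ^ 2 else 0)
        = (if r < s then blockMass c r s A else 0) + if r = s then blockUpperMass c r A else 0 := by
    intro r s
    rcases lt_trichotomy r s with h | rfl | h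
    · simp only [if_pos h, if_neg h.ne, add_zero, blockMass]
      refine sum_congr rfl fun a ha => sum_congr rfl fun b hb => ?_
      rw [if_pos (lt_of_inBlk_of_lt h (mem_blk.1 ha) (mem_blk.1 hb))]
    · simp [blockUpperMass]
    · simp only [if_neg h.not_gt, if_neg h.ne', add_zero]
      refine sum_eq_zero fun a ha => sum_eq_zero fun b hb => ?_
      rw [if_neg (lt_of_inBlk_of_lt h (mem_blk.1 hb) (mem_blk.1 ha)).not_gt]
  unfold offSq
  simp_rw [sum_eq_sum_blk hm, sum_comm (s := blk n c _) (t := range m), hblock, sum_add_distrib]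
  rw [sum_comm]
  congr 1
  · refine sum_congr rfl fun j hj => ?_
    rw [← sum_filter]
    congr 1
    ext r
    simp only [mem_filter, mem_range] at hj ⊢
    omega
  · exact sum_congr rfl fun r hr => by simp [hr]

section Vectors

variable {ι : Type*}

section

variable [Fintype ι]

def sqNorm (x : ι → ℝ) : ℝ := ∑ i, x i ^ 2

lemma sqNorm_eq_dotProduct (x : ι → ℝ) : sqNorm x = x ⬝ᵥ x := by
  simp [sqNorm, dotProduct, sq]

lemma sqNorm_nonneg (x : ι → ℝ) : 0 ≤ sqNorm x := by
  unfold sqNorm; positivity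

lemma sqNorm_eq_zero {x : ι → ℝ} : sqNorm x = 0 ↔ x = 0 := by
  rw [sqNorm_eq_dotProduct, dotProduct_self_eq_zero]

lemma sqrt_sqNorm_smul (a : ℝ) (x : ι → ℝ) :
    √(sqNorm (a • x)) = |a| * √(sqNorm x) := by
  have : sqNorm (a • x) = a ^ 2 * sqNorm x := by
    simp [sqNorm, mul_sum, mul_pow]
  rw [this, Real.sqrt_mul (sq_nonneg a), Real.sqrt_sq_eq_abs]

lemma sqNorm_add_ge (u w : ι → ℝ) : sqNorm u / 2 - sqNorm w ≤ sqNorm (u + w) := by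
  simp only [sqNorm, Pi.add_apply, sum_div, ← sum_sub_distrib]
  exact sum_le_sum fun i _ => by nlinarith [sq_nonneg (u i + 2 * w i)]

end

variable [DecidableEq ι]

def restr (s : Finset ι) : (ι → ℝ) →ₗ[ℝ] ι → ℝ where
  toFun x t := if t ∈ s then x t else 0
  map_add' x y := by ext t; by_cases ht : t ∈ s <;> simp [ht]
  map_smul' a x := by ext t; by_cases ht : t ∈ s <;> simp [ht]

def supported (s : Finset ι) : Submodule ℝ (ι → ℝ) where
  carrier := {x | ∀ t ∉ s, x t = 0}
  add_mem' hx hy t ht := by simp [hx t ht, hy t ht]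
  zero_mem' _ _ := rfl
  smul_mem' a x hx t ht := by simp [hx t ht]

lemma restr_apply (s : Finset ι) (x : ι → ℝ) (t : ι) :
    restr s x t = if t ∈ s then x t else 0 := rfl

lemma restr_mem (s : Finset ι) (x : ι → ℝ) : restr s x ∈ supported s := fun t ht => by
  simp [restr_apply, ht]

lemma restr_eq_self {s : Finset ι} {x : ι → ℝ} (hx : x ∈ supported s) : restr s x = x := by
  ext t; by_cases ht : t ∈ s <;> simp [restr_apply, ht, hx t]

lemma restr_union {s t : Finset ι} (h : Disjoint s t) (x : ι → ℝ) :
    restr (s ∪ t) x = restr s x + restr t x := by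
  ext a
  by_cases hs : a ∈ s
  · simp [restr_apply, hs, disjoint_left.1 h hs]
  · by_cases ht : a ∈ t <;> simp [restr_apply, hs, ht]

variable [Fintype ι]

lemma sqNorm_restr (s : Finset ι) (x : ι → ℝ) : sqNorm (restr s x) = ∑ t ∈ s, x t ^ 2 := by
  simp [sqNorm, restr_apply, ite_pow, sum_ite_mem]

lemma sqNorm_restr_le (s : Finset ι) (x : ι → ℝ) : sqNorm (restr s x) ≤ sqNorm x :=
  sum_le_sum fun t _ => by by_cases ht : t ∈ s <;> simp [restr_apply, ht, sq_nonneg]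

lemma restr_dotProduct (s : Finset ι) (x y : ι → ℝ) : restr s x ⬝ᵥ y = x ⬝ᵥ restr s y := by
  simp only [dotProduct, restr_apply]
  exact sum_congr rfl fun t _ => by split_ifs <;> simp

/-- `σ_min` of a principal submatrix equals `σ_min` of its transpose: the compressed map is
injective on `supported s`, hence onto, and Cauchy–Schwarz finishes. -/
lemma sq_mul_sqNorm_le_restr_transpose_mulVec {U : Matrix ι ι ℝ} {s : Finset ι} {σ : ℝ}
    (hσ : 0 < σ) (h : ∀ x ∈ supported s, σ ^ 2 * sqNorm x ≤ sqNorm (restr s (U *ᵥ x)))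
    {y : ι → ℝ} (hy : y ∈ supported s) :
    σ ^ 2 * sqNorm y ≤ sqNorm (restr s (Uᵀ *ᵥ y)) := by
  let φ : supported s →ₗ[ℝ] supported s :=
    ((restr s).comp U.mulVecLin).restrict fun x _ => restr_mem s _
  have hinj : Function.Injective φ := by
    refine (injective_iff_map_eq_zero φ).2 fun x hx => ?_
    have h0 : restr s (U *ᵥ (x : ι → ℝ)) = 0 := congrArg Subtype.val hx
    have := h x x.2
    rw [h0, show sqNorm (0 : ι → ℝ) = 0 by simp [sqNorm]] at this
    have hx0 : sqNorm (x : ι → ℝ) = 0 :=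
      le_antisymm (by nlinarith [sqNorm_nonneg (x : ι → ℝ), pow_pos hσ 2]) (sqNorm_nonneg _)
    exact Subtype.ext (sqNorm_eq_zero.1 hx0)
  obtain ⟨x, hx⟩ := LinearMap.injective_iff_surjective.1 hinj ⟨y, hy⟩
  have hUx : restr s (U *ᵥ (x : ι → ℝ)) = y := congrArg Subtype.val hx
  have hdot : restr s (Uᵀ *ᵥ y) ⬝ᵥ x = sqNorm y := by
    rw [restr_dotProduct, restr_eq_self x.2, mulVec_transpose, ← dotProduct_mulVec,
      ← restr_eq_self hy, restr_dotProduct, hUx, restr_eq_self hy, sqNorm_eq_dotProduct]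
  have hcs : (sqNorm y) ^ 2 ≤ sqNorm (restr s (Uᵀ *ᵥ y)) * sqNorm (x : ι → ℝ) :=
    hdot ▸ sum_mul_sq_le_sq_mul_sq univ _ _
  have hlow := hUx ▸ h x x.2
  rcases (sqNorm_nonneg y).eq_or_lt with hy0 | hy0
  · rw [← hy0, mul_zero]; exact sqNorm_nonneg _
  · nlinarith [sqNorm_nonneg (restr s (Uᵀ *ᵥ y)), sqNorm_nonneg (x : ι → ℝ)]

end Vectors

lemma sq_mul_sqNorm_le_of_le_sigmaMinBlk {r : ℕ} {U : Matrix (Fin n) (Fin n) ℝ} {σ : ℝ}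
    (hσ : 0 ≤ σ) (h : σ ≤ sigmaMinBlk c r U) {x : Fin n → ℝ} (hx : x ∈ supported (blk n c r)) :
    σ ^ 2 * sqNorm x ≤ sqNorm (restr (blk n c r) (U *ᵥ x)) := by
  by_cases hx0 : x = 0
  · simp [hx0, sqNorm]
  set t := √(sqNorm x)
  have ht : 0 < t := Real.sqrt_pos.2 ((sqNorm_nonneg x).lt_of_ne' (mt sqNorm_eq_zero.1 hx0))
  have hmem : √(sqNorm (restr (blk n c r) (U *ᵥ (t⁻¹ • x)))) ∈ { v : ℝ | ∃ y : Fin n → ℝ,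
      (∀ u : Fin n, ¬ inBlk c r u → y u = 0) ∧ enorm y = 1 ∧
      enorm (fun u : Fin n => if inBlk c r u then U.mulVec y u else 0) = v } := by
    refine ⟨t⁻¹ • x, fun u hu => by simp [hx u (by simpa using hu)], ?_, ?_⟩
    · change √(sqNorm (t⁻¹ • x)) = 1
      rw [sqrt_sqNorm_smul, abs_of_pos (inv_pos.2 ht), inv_mul_cancel₀ ht.ne']
    · simp [enorm, sqNorm, restr_apply]
  have hv : σ ≤ t⁻¹ * √(sqNorm (restr (blk n c r) (U *ᵥ x))) := by
    refine h.trans ((csInf_le ⟨0, ?_⟩ hmem).trans_eq ?_)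
    · rintro _ ⟨y, -, -, rfl⟩; exact Real.sqrt_nonneg _
    · rw [mulVec_smul, map_smul, sqrt_sqNorm_smul, abs_of_pos (inv_pos.2 ht)]
  have hσt : σ * t ≤ √(sqNorm (restr (blk n c r) (U *ᵥ x))) := by
    rwa [le_inv_mul_iff₀ ht, mul_comm] at hv
  calc σ ^ 2 * sqNorm x = (σ * t) ^ 2 := by rw [mul_pow, Real.sq_sqrt (sqNorm_nonneg x)]
    _ ≤ √(sqNorm (restr (blk n c r) (U *ᵥ x))) ^ 2 := pow_le_pow_left₀ (by positivity) hσt 2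
    _ = _ := Real.sq_sqrt (sqNorm_nonneg _)

section Step

variable {s : Finset (Fin n)} {U C : Matrix (Fin n) (Fin n) ℝ}

lemma sqNorm_transpose_mulVec (hU : U * Uᵀ = 1) (z : Fin n → ℝ) : sqNorm (Uᵀ *ᵥ z) = sqNorm z := by
  rw [sqNorm_eq_dotProduct, sqNorm_eq_dotProduct, dotProduct_mulVec, vecMul_transpose,
    mulVec_mulVec, hU, one_mulVec]

lemma sum_sq_transpose_mul_apply (hU : U * Uᵀ = 1) (M : Matrix (Fin n) (Fin n) ℝ) (b : Fin n) :
    ∑ a, (Uᵀ * M) a b ^ 2 = ∑ a, M a b ^ 2 :=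
  sqNorm_transpose_mulVec hU fun a => M a b

lemma sum_sq_mul_apply (hU : U * Uᵀ = 1) (M : Matrix (Fin n) (Fin n) ℝ) (a : Fin n) :
    ∑ b, (M * U) a b ^ 2 = ∑ b, M a b ^ 2 := by
  calc ∑ b, (M * U) a b ^ 2 = sqNorm (Uᵀ *ᵥ M a) := by
        simp [sqNorm, mul_apply, mulVec, dotProduct, mul_comm]
    _ = ∑ b, M a b ^ 2 := sqNorm_transpose_mulVec hU (M a)

def ActsOn (s : Finset (Fin n)) (U : Matrix (Fin n) (Fin n) ℝ) : Prop :=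
  ∀ a b, ¬(a ∈ s ∧ b ∈ s) → U a b = if a = b then 1 else 0

lemma actsOn_univ (U : Matrix (Fin n) (Fin n) ℝ) : ActsOn univ U := fun _ _ h =>
  absurd ⟨mem_univ _, mem_univ _⟩ h

lemma IsElem.actsOn {i j : ℕ} (hE : IsElem c i j U) : ActsOn (piv n c i j) U := fun a b h =>
  hE a b (by simpa using h)

lemma ActsOn.transpose_mul_apply (h : ActsOn s U) (M : Matrix (Fin n) (Fin n) ℝ) {a : Fin n}
    (ha : a ∉ s) (b : Fin n) : (Uᵀ * M) a b = M a b := by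
  rw [mul_apply, sum_eq_single a]
  · rw [transpose_apply, h a a (fun h' => ha h'.1), if_pos rfl, one_mul]
  · intro q _ hq
    rw [transpose_apply, h q a (fun h' => ha h'.2), if_neg hq, zero_mul]
  · simp

lemma ActsOn.mul_apply (h : ActsOn s U) (M : Matrix (Fin n) (Fin n) ℝ) {b : Fin n}
    (hb : b ∉ s) (a : Fin n) : (M * U) a b = M a b := by
  rw [Matrix.mul_apply, sum_eq_single b]
  · rw [h b b (fun h' => hb h'.1), if_pos rfl, mul_one]
  · intro q _ hq
    rw [h q b (fun h' => hb h'.2), if_neg hq, mul_zero]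
  · simp

lemma ActsOn.conj_apply (h : ActsOn s U) {a b : Fin n} (ha : a ∉ s) (hb : b ∉ s) :
    (Uᵀ * C * U) a b = C a b := by
  rw [Matrix.mul_assoc, h.transpose_mul_apply _ ha, h.mul_apply _ hb]

lemma ActsOn.transpose_mulVec_apply (h : ActsOn s U) {t : Fin n} (ht : t ∈ s) (z : Fin n → ℝ) :
    (Uᵀ *ᵥ z) t = (Uᵀ *ᵥ restr s z) t := by
  simp only [mulVec, dotProduct, transpose_apply, restr_apply]
  refine sum_congr rfl fun a _ => ?_
  by_cases ha : a ∈ s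
  · rw [if_pos ha]
  · rw [h a t (fun h' => ha h'.1), if_neg (by rintro rfl; exact ha ht)]
    simp

lemma sum_eq_sum_of_sum_univ_eq {f g : Fin n → ℝ} (h : ∑ a, f a = ∑ a, g a)
    (hfg : ∀ a ∉ s, f a = g a) : ∑ a ∈ s, f a = ∑ a ∈ s, g a := by
  have hf := sum_compl_add_sum s f
  have hg := sum_compl_add_sum s g
  have : ∑ a ∈ sᶜ, f a = ∑ a ∈ sᶜ, g a := sum_congr rfl fun a ha => hfg a (mem_compl.1 ha)
  linarith

lemma ActsOn.sum_sq_transpose_mul_apply (h : ActsOn s U) (hU : U * Uᵀ = 1)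
    (M : Matrix (Fin n) (Fin n) ℝ) (b : Fin n) :
    ∑ a ∈ s, (Uᵀ * M) a b ^ 2 = ∑ a ∈ s, M a b ^ 2 :=
  sum_eq_sum_of_sum_univ_eq (BlockJacobi.sum_sq_transpose_mul_apply hU M b) fun a ha => by
    rw [h.transpose_mul_apply M ha]

lemma ActsOn.sum_sq_mul_apply (h : ActsOn s U) (hU : U * Uᵀ = 1)
    (M : Matrix (Fin n) (Fin n) ℝ) (a : Fin n) :
    ∑ b ∈ s, (M * U) a b ^ 2 = ∑ b ∈ s, M a b ^ 2 :=
  sum_eq_sum_of_sum_univ_eq (BlockJacobi.sum_sq_mul_apply hU M a) fun b hb => by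
    rw [h.mul_apply M hb]

lemma ActsOn.sum_sq_conj (h : ActsOn s U) (hU : U * Uᵀ = 1) :
    ∑ a ∈ s, ∑ b ∈ s, (Uᵀ * C * U) a b ^ 2 = ∑ a ∈ s, ∑ b ∈ s, C a b ^ 2 := by
  rw [sum_comm]
  simp_rw [Matrix.mul_assoc, h.sum_sq_transpose_mul_apply hU]
  rw [sum_comm]
  simp_rw [h.sum_sq_mul_apply hU]

lemma sum_sq_eq_add_offMassOn (s : Finset (Fin n)) (M : Matrix (Fin n) (Fin n) ℝ) :
    ∑ a ∈ s, ∑ b ∈ s, M a b ^ 2 = ∑ a ∈ s, M a a ^ 2 + offMassOn s M := by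
  rw [offMassOn, ← sum_add_distrib]
  refine sum_congr rfl fun a ha => ?_
  have hdiag : M a a ^ 2 = ∑ b ∈ s, if a = b then M a b ^ 2 else 0 := by
    rw [sum_ite_eq, if_pos ha]
  rw [hdiag, ← sum_add_distrib]
  exact sum_congr rfl fun b _ => by split_ifs <;> simp

lemma two_mul_offSq {M : Matrix (Fin n) (Fin n) ℝ} (hM : M.IsSymm) :
    2 * offSq M = offMassOn univ M := by
  have hlower : ∑ a : Fin n, ∑ b : Fin n, (if (b : ℕ) < a then M a b ^ 2 else 0) = offSq M := by
    rw [offSq, sum_comm]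
    simp_rw [hM.apply]
  rw [two_mul]
  nth_rw 2 [← hlower]
  rw [offSq, offMassOn, ← sum_add_distrib]
  refine sum_congr rfl fun a _ => ?_
  rw [← sum_add_distrib]
  refine sum_congr rfl fun b _ => ?_
  rcases lt_trichotomy (a : ℕ) b with h | h | h
  · simp [h, h.not_gt, Fin.ne_of_lt h]
  · simp [Fin.ext h]
  · simp [h, h.not_gt, Fin.ne_of_gt h]

lemma ActsOn.offMassOn_univ_conj (h : ActsOn s U) (hU : U * Uᵀ = 1)
    (hPD : offMassOn s (Uᵀ * C * U) = 0) :
    offMassOn univ (Uᵀ * C * U) = offMassOn univ C - offMassOn s C := by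
  have hdiag : ∑ a ∈ sᶜ, (Uᵀ * C * U) a a ^ 2 = ∑ a ∈ sᶜ, C a a ^ 2 :=
    sum_congr rfl fun a ha => by rw [h.conj_apply (mem_compl.1 ha) (mem_compl.1 ha)]
  have h1 := sum_sq_eq_add_offMassOn univ (Uᵀ * C * U)
  have h2 := sum_sq_eq_add_offMassOn univ C
  have h3 := sum_sq_eq_add_offMassOn s (Uᵀ * C * U)
  have h4 := sum_sq_eq_add_offMassOn s C
  have h5 := sum_compl_add_sum s fun a => (Uᵀ * C * U) a a ^ 2
  have h6 := sum_compl_add_sum s fun a => C a a ^ 2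
  have h7 := (actsOn_univ U).sum_sq_conj (C := C) hU
  have h8 := h.sum_sq_conj (C := C) hU
  linarith

lemma isSymm_conj (hC : C.IsSymm) (U : Matrix (Fin n) (Fin n) ℝ) : (Uᵀ * C * U).IsSymm := by
  rw [IsSymm, transpose_mul, transpose_mul, transpose_transpose, hC.eq, Matrix.mul_assoc]

variable {i j : ℕ}

lemma offMassOn_piv_eq_zero (hPD : PivDiag c i j C) : offMassOn (piv n c i j) C = 0 :=
  sum_eq_zero fun a ha => sum_eq_zero fun b hb => by
    split_ifs with hab
    · rfl
    · rw [hPD a b hab (mem_piv.1 ha) (mem_piv.1 hb)]; simp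

lemma offSq_conj (hO : Orth U) (hE : IsElem c i j U) (hC : C.IsSymm)
    (hPD : PivDiag c i j (Uᵀ * C * U)) :
    offSq (Uᵀ * C * U) = offSq C - offMassOn (piv n c i j) C / 2 := by
  have h1 := two_mul_offSq (isSymm_conj hC U)
  have h2 := two_mul_offSq hC
  have h3 := hE.actsOn.offMassOn_univ_conj (mul_eq_one_comm.mp hO) (offMassOn_piv_eq_zero hPD)
  linarith

lemma IsElem.blockMass_conj (hE : IsElem c i j U) {r s : ℕ} (hri : r ≠ i) (hrj : r ≠ j)
    (hsi : s ≠ i) (hsj : s ≠ j) : blockMass c r s (Uᵀ * C * U) = blockMass c r s C :=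
  sum_congr rfl fun a ha => sum_congr rfl fun b hb => by
    rw [hE.actsOn.conj_apply (by simpa using not_inPiv_of_inBlk (mem_blk.1 ha) hri hrj)
      (by simpa using not_inPiv_of_inBlk (mem_blk.1 hb) hsi hsj)]

lemma blockMass_add_blockMass (hij : i ≠ j) (s : ℕ) (M : Matrix (Fin n) (Fin n) ℝ) :
    blockMass c i s M + blockMass c j s M = ∑ b ∈ blk n c s, ∑ a ∈ piv n c i j, M a b ^ 2 := by
  unfold blockMass
  rw [sum_comm (s := blk n c i), sum_comm (s := blk n c j), ← sum_add_distrib]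
  exact sum_congr rfl fun b _ => (sum_union (disjoint_blk hij)).symm

lemma blockMass_add_blockMass_conj (hO : Orth U) (hE : IsElem c i j U) (hij : i ≠ j) {s : ℕ}
    (hsi : s ≠ i) (hsj : s ≠ j) :
    blockMass c i s (Uᵀ * C * U) + blockMass c j s (Uᵀ * C * U)
      = blockMass c i s C + blockMass c j s C := by
  rw [blockMass_add_blockMass hij, blockMass_add_blockMass hij]
  refine sum_congr rfl fun b hb => ?_
  have hb' : b ∉ piv n c i j := by simpa using not_inPiv_of_inBlk (mem_blk.1 hb) hsi hsj
  rw [Matrix.mul_assoc, hE.actsOn.sum_sq_transpose_mul_apply (mul_eq_one_comm.mp hO)]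
  simp_rw [hE.actsOn.mul_apply C hb']

lemma IsElem.restr_col_conj (hE : IsElem c i j U) (hij : i ≠ j) {b : Fin n}
    (hb : b ∉ piv n c i j) :
    restr (blk n c j) (fun t => (Uᵀ * C * U) t b)
      = restr (blk n c j) (Uᵀ *ᵥ restr (blk n c j) fun t => C t b)
        + restr (blk n c j) (Uᵀ *ᵥ restr (blk n c i) fun t => C t b) := by
  have hcol : (fun t => (Uᵀ * C * U) t b) = Uᵀ *ᵥ fun t => C t b := by
    ext t
    rw [Matrix.mul_assoc, mul_apply]
    simp only [hE.actsOn.mul_apply C hb]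
    rfl
  rw [hcol]
  ext t
  by_cases ht : t ∈ blk n c j
  · rw [Pi.add_apply, restr_apply, restr_apply, restr_apply, if_pos ht, if_pos ht, if_pos ht,
      hE.actsOn.transpose_mulVec_apply (mem_union_right _ ht), piv,
      restr_union (disjoint_blk hij), mulVec_add, Pi.add_apply, add_comm]
  · simp [restr_apply, ht]

/-- The only place where the UBC bound on `σ_min(U_jj)` enters. -/
lemma blockMass_conj_ge (hO : Orth U) (hE : IsElem c i j U) (hij : i ≠ j) {σ : ℝ} (hσ : 0 < σ)
    (hs : σ ≤ sigmaMinBlk c j U) {r : ℕ} (hri : r ≠ i) (hrj : r ≠ j) :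
    σ ^ 2 / 2 * blockMass c j r C - blockMass c i r C ≤ blockMass c j r (Uᵀ * C * U) := by
  have hcol : ∀ b ∈ blk n c r, σ ^ 2 / 2 * ∑ t ∈ blk n c j, C t b ^ 2 - ∑ t ∈ blk n c i, C t b ^ 2
      ≤ ∑ t ∈ blk n c j, (Uᵀ * C * U) t b ^ 2 := by
    intro b hb
    set z : Fin n → ℝ := fun t => C t b
    have hmain := sqNorm_add_ge (restr (blk n c j) (Uᵀ *ᵥ restr (blk n c j) z))
      (restr (blk n c j) (Uᵀ *ᵥ restr (blk n c i) z))
    rw [← hE.restr_col_conj hij (by simpa using not_inPiv_of_inBlk (mem_blk.1 hb) hri hrj)]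
      at hmain
    have hlow := sq_mul_sqNorm_le_restr_transpose_mulVec hσ
      (fun x hx => sq_mul_sqNorm_le_of_le_sigmaMinBlk hσ.le hs hx) (restr_mem (blk n c j) z)
    have hup := (sqNorm_restr_le (blk n c j) _).trans
      (sqNorm_transpose_mulVec (mul_eq_one_comm.mp hO) (restr (blk n c i) z)).le
    simp only [sqNorm_restr] at hmain hlow hup
    linarith
  simp only [blockMass]
  rw [sum_comm, sum_comm (s := blk n c i), sum_comm (s := blk n c j) (t := blk n c r), mul_sum,
    ← sum_sub_distrib]
  exact sum_le_sum hcol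

lemma sum_blockMass_conj (hO : Orth U) (hE : IsElem c i j U) (hij : i ≠ j) {T : Finset ℕ}
    (hi : i ∈ T) (hj : j ∈ T) {s : ℕ} (hs : s ∉ T) :
    ∑ r ∈ T, blockMass c r s (Uᵀ * C * U) = ∑ r ∈ T, blockMass c r s C := by
  have hsi : s ≠ i := fun h => hs (h ▸ hi)
  have hsj : s ≠ j := fun h => hs (h ▸ hj)
  have hsplit : ∀ M : Matrix (Fin n) (Fin n) ℝ, ∑ r ∈ T, blockMass c r s M
      = blockMass c i s M + blockMass c j s M + ∑ r ∈ (T.erase i).erase j, blockMass c r s M := by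
    intro M
    rw [← add_sum_erase T _ hi, ← add_sum_erase (T.erase i) _ (mem_erase.2 ⟨hij.symm, hj⟩),
      add_assoc]
  rw [hsplit, hsplit, blockMass_add_blockMass_conj hO hE hij hsi hsj]
  congr 1
  refine sum_congr rfl fun r hr => ?_
  obtain ⟨hrj, hr⟩ := mem_erase.1 hr
  exact hE.blockMass_conj (mem_erase.1 hr).1 hrj hsi hsj

lemma blockMass_conj_le_two_mul (hO : Orth U) (hE : IsElem c i j U) (hij : i ≠ j)
    (hPD : PivDiag c i j (Uᵀ * C * U)) (hC : C.IsSymm) {T : Set ℕ} (hi : i ∈ T) (hj : j ∈ T)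
    {X : ℝ} (hX : ∀ a ∈ T, ∀ b ∈ T, a ≠ b → blockMass c a b C ≤ X) :
    ∀ a ∈ T, ∀ b ∈ T, a ≠ b → blockMass c a b (Uᵀ * C * U) ≤ 2 * X := by
  have hX0 : 0 ≤ X := (blockMass_nonneg c i j C).trans (hX i hi j hj hij)
  have hC' := isSymm_conj hC U
  have hpair : ∀ a, (a = i ∨ a = j) → ∀ b ∈ T, b ≠ i → b ≠ j →
      blockMass c a b (Uᵀ * C * U) ≤ 2 * X := by
    intro a ha b hb hbi hbj
    have := blockMass_add_blockMass_conj (C := C) hO hE hij hbi hbj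
    have := hX i hi b hb (Ne.symm hbi)
    have := hX j hj b hb (Ne.symm hbj)
    have := blockMass_nonneg c i b (Uᵀ * C * U)
    have := blockMass_nonneg c j b (Uᵀ * C * U)
    rcases ha with rfl | rfl <;> linarith
  have hzero : blockMass c i j (Uᵀ * C * U) = 0 := blockMass_eq_zero_of_pivDiag hij hPD
  intro a ha b hb hab
  by_cases ha' : a = i ∨ a = j
  · by_cases hb' : b = i ∨ b = j
    · obtain ⟨rfl, rfl⟩ | ⟨rfl, rfl⟩ : (a = i ∧ b = j) ∨ (a = j ∧ b = i) := by omega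
      · linarith
      · rw [blockMass_comm hC']; linarith
    · rw [not_or] at hb'
      exact hpair a ha' b hb hb'.1 hb'.2
  · rw [not_or] at ha'
    by_cases hb' : b = i ∨ b = j
    · rw [blockMass_comm hC']
      exact hpair b hb' a ha ha'.1 ha'.2
    · rw [not_or] at hb'
      rw [hE.blockMass_conj ha'.1 ha'.2 hb'.1 hb'.2]
      linarith [hX a ha b hb hab]

end Step

section Run

variable {σ : ℝ} {i j : ℕ} {U C : Matrix (Fin n) (Fin n) ℝ}

structure Admissible (c : ℕ → ℕ) (σ : ℝ) (i j : ℕ) (U : Matrix (Fin n) (Fin n) ℝ) : Prop where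
  elem : IsElem c i j U
  orth : Orth U
  le_sigmaMin : σ ≤ sigmaMinBlk c j U

lemma IsUBC2.admissible {cg : ℕ → ℕ} {ρ : ℝ} (hU : IsUBC2 c cg ρ i j U)
    (hσ : σ ≤ ρ * gammaUBC cg i j) : Admissible c σ i j U :=
  ⟨hU.1, hU.2.1, hU.2.2.1 ▸ hσ.trans hU.2.2.2⟩

def JacobiRun (c : ℕ → ℕ) (σ : ℝ) :
    List (ℕ × ℕ) → Matrix (Fin n) (Fin n) ℝ → Matrix (Fin n) (Fin n) ℝ → Prop
  | [], A, A' => A' = A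
  | p :: l, A, A' => ∃ U, Admissible c σ p.1 p.2 U ∧ PivDiag c p.1 p.2 (Uᵀ * A * U) ∧
      JacobiRun c σ l (Uᵀ * A * U) A'

lemma Sweep2.jacobiRun {cg : ℕ → ℕ} {ρ : ℝ} :
    ∀ {L : List (ℕ × ℕ)} {A A' : Matrix (Fin n) (Fin n) ℝ}, Sweep2 c cg ρ L A A' →
      (∀ p ∈ L, σ ≤ ρ * gammaUBC cg p.1 p.2) → JacobiRun c σ L A A'
  | [], A, A', ⟨B, h0, hT, _⟩, _ => hT.symm.trans h0
  | p :: l, A, A', ⟨B, h0, hT, hstep⟩, hσ => by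
    obtain ⟨U, hU, hB1, hPD⟩ := hstep 0 (by simp)
    rw [h0] at hB1
    refine ⟨U, hU.admissible (hσ p List.mem_cons_self), hB1 ▸ hPD, hB1 ▸ ?_⟩
    refine Sweep2.jacobiRun ⟨fun k => B (k + 1), rfl, hT, fun k hk => ?_⟩
      fun q hq => hσ q (List.mem_cons_of_mem p hq)
    exact hstep (k + 1) (by simpa using hk)

lemma Admissible.mul_blockMass_le (hU : Admissible c σ i j U) (hσ : 0 < σ) (hij : i ≠ j)
    (hC : C.IsSymm) {r : ℕ} (hri : r ≠ i) (hrj : r ≠ j) :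
    σ ^ 2 / 2 * blockMass c r j C ≤ blockMass c r j (Uᵀ * C * U) + blockMass c i r C := by
  have := blockMass_conj_ge (C := C) hU.orth hU.elem hij hσ hU.le_sigmaMin hri hrj
  rw [blockMass_comm hC j r, blockMass_comm (isSymm_conj hC U) j r] at this
  linarith

namespace JacobiRun

lemma append_iff : ∀ {l₁ l₂ : List (ℕ × ℕ)} {A A' : Matrix (Fin n) (Fin n) ℝ},
    JacobiRun c σ (l₁ ++ l₂) A A' ↔ ∃ M, JacobiRun c σ l₁ A M ∧ JacobiRun c σ l₂ M A'
  | [], _, A, _ => ⟨fun h => ⟨A, rfl, h⟩, fun ⟨_, hM, h⟩ => hM ▸ h⟩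
  | p :: l, l₂, A, A' => by
    simp only [List.cons_append, JacobiRun]
    constructor
    · rintro ⟨U, hU, hPD, h⟩
      obtain ⟨M, h₁, h₂⟩ := append_iff.1 h
      exact ⟨M, ⟨U, hU, hPD, h₁⟩, h₂⟩
    · rintro ⟨M, ⟨U, hU, hPD, h₁⟩, h₂⟩
      exact ⟨U, hU, hPD, append_iff.2 ⟨M, h₁, h₂⟩⟩

lemma isSymm : ∀ {l : List (ℕ × ℕ)} {A A' : Matrix (Fin n) (Fin n) ℝ},
    JacobiRun c σ l A A' → A.IsSymm → A'.IsSymm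
  | [], _, _, h, hA => h ▸ hA
  | _ :: _, _, _, ⟨U, _, _, h⟩, hA => h.isSymm (isSymm_conj hA U)

lemma offSq_le : ∀ {l : List (ℕ × ℕ)} {A A' : Matrix (Fin n) (Fin n) ℝ},
    JacobiRun c σ l A A' → A.IsSymm → offSq A' ≤ offSq A
  | [], _, _, h, _ => h ▸ le_rfl
  | p :: _, A, _, ⟨U, hU, hPD, h⟩, hA => by
    have := offSq_conj hU.orth hU.elem hA hPD
    have := offMassOn_nonneg (piv n c p.1 p.2) A
    linarith [h.offSq_le (isSymm_conj hA U)]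

lemma offMassOn_piv_le {p : ℕ × ℕ} {l : List (ℕ × ℕ)} {A A' : Matrix (Fin n) (Fin n) ℝ}
    (h : JacobiRun c σ (p :: l) A A') (hA : A.IsSymm) :
    offMassOn (piv n c p.1 p.2) A ≤ 2 * (offSq A - offSq A') := by
  obtain ⟨U, hU, hPD, h⟩ := h
  have := offSq_conj hU.orth hU.elem hA hPD
  linarith [h.offSq_le (isSymm_conj hA U)]

lemma blockUpperMass_eq {r : ℕ} : ∀ {l : List (ℕ × ℕ)} {A A' : Matrix (Fin n) (Fin n) ℝ},
    JacobiRun c σ l A A' → (∀ p ∈ l, p.1 ≠ r ∧ p.2 ≠ r) →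
      blockUpperMass c r A' = blockUpperMass c r A
  | [], _, _, h, _ => h ▸ rfl
  | p :: _, A, _, ⟨U, hU, _, h⟩, hl => by
    obtain ⟨h1, h2⟩ := hl p List.mem_cons_self
    rw [h.blockUpperMass_eq fun q hq => hl q (List.mem_cons_of_mem p hq)]
    refine sum_congr rfl fun a ha => sum_congr rfl fun b hb => ?_
    rw [mem_blk] at ha hb
    rw [hU.elem.actsOn.conj_apply (by simpa using not_inPiv_of_inBlk ha h1.symm h2.symm)
      (by simpa using not_inPiv_of_inBlk hb h1.symm h2.symm)]

end JacobiRun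

lemma JacobiRun.sum_blockMass_eq {T : Finset ℕ} {s : ℕ} (hs : s ∉ T) :
    ∀ {l : List (ℕ × ℕ)} {A A' : Matrix (Fin n) (Fin n) ℝ}, JacobiRun c σ l A A' →
      (∀ p ∈ l, p.1 ∈ T ∧ p.2 ∈ T ∧ p.1 ≠ p.2) →
      ∑ r ∈ T, blockMass c r s A' = ∑ r ∈ T, blockMass c r s A
  | [], _, _, h, _ => h ▸ rfl
  | p :: _, _, _, ⟨_, hU, _, h⟩, hl => by
    obtain ⟨hi, hj, hij⟩ := hl p List.mem_cons_self
    rw [h.sum_blockMass_eq hs fun q hq => hl q (List.mem_cons_of_mem p hq),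
      sum_blockMass_conj hU.orth hU.elem hij hi hj hs]

lemma JacobiRun.blockMass_le {T : Set ℕ} :
    ∀ {l : List (ℕ × ℕ)} {A A' : Matrix (Fin n) (Fin n) ℝ} {X : ℝ}, JacobiRun c σ l A A' →
      A.IsSymm → (∀ p ∈ l, p.1 ∈ T ∧ p.2 ∈ T ∧ p.1 ≠ p.2) →
      (∀ a ∈ T, ∀ b ∈ T, a ≠ b → blockMass c a b A ≤ X) →
      ∀ a ∈ T, ∀ b ∈ T, a ≠ b → blockMass c a b A' ≤ 2 ^ l.length * X
  | [], _, _, _, h, _, _, hX => by subst h; simpa using hX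
  | p :: l, A, _, X, ⟨U, hU, hPD, h⟩, hA, hl, hX => by
    obtain ⟨hi, hj, hij⟩ := hl p List.mem_cons_self
    have := h.blockMass_le (isSymm_conj hA U) (fun q hq => hl q (List.mem_cons_of_mem p hq))
      (blockMass_conj_le_two_mul hU.orth hU.elem hij hPD hA hi hj hX)
    simpa [pow_succ, mul_assoc] using this

/-- Each step before the one at `(r, j)` keeps a `σ²/2` fraction of the mass of block `(r, j)`,
up to mass moved in from a block among the rows; the step at `(r, j)` annihilates it, which
costs a decrease of `S²` of at least half its mass. -/
lemma JacobiRun.pow_mul_blockMass_le (hσ : 0 < σ) (hσ1 : σ ≤ 1) {j : ℕ} {P : ℝ} (hP : 0 ≤ P) :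
    ∀ {rows : List ℕ} {C D : Matrix (Fin n) (Fin n) ℝ},
      JacobiRun c σ (rows.map fun r => (r, j)) C D → C.IsSymm → rows.Nodup → j ∉ rows →
      (∀ a ∈ rows, ∀ b ∈ rows, a ≠ b → blockMass c a b C ≤ P) →
      ∀ r ∈ rows, (σ ^ 2 / 2) ^ rows.length * blockMass c r j C
        ≤ 2 * (offSq C - offSq D) + rows.length * P
  | [], _, _, _, _, _, _, _ => by simp
  | i :: rows, C, D, ⟨U, hU, hPD, h⟩, hC, hnd, hj, hrows => by
    dsimp only at hU hPD
    have hβ0 : 0 ≤ σ ^ 2 / 2 := by positivity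
    have hβ1 : σ ^ 2 / 2 ≤ 1 := by nlinarith
    have hpow0 : 0 ≤ (σ ^ 2 / 2) ^ rows.length := pow_nonneg hβ0 _
    have hpow1 : (σ ^ 2 / 2) ^ rows.length ≤ 1 := pow_le_one₀ hβ0 hβ1
    rw [List.nodup_cons] at hnd
    have hij : i ≠ j := fun e => hj (e ▸ List.mem_cons_self)
    have hC₁ := isSymm_conj hC U
    have hstep := offSq_conj hU.orth hU.elem hC hPD
    have hmono := h.offSq_le hC₁
    have hpiv := offMassOn_nonneg (piv n c i j) C
    rw [List.length_cons, pow_succ, Nat.cast_succ]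
    intro r hr
    rcases List.mem_cons.1 hr with rfl | hr
    · have := blockMass_le_offMassOn_piv (c := c) hij C
      have := blockMass_nonneg c r j C
      have : (σ ^ 2 / 2) ^ rows.length * (σ ^ 2 / 2) ≤ 1 := mul_le_one₀ hpow1 hβ0 hβ1
      nlinarith
    · have hri : r ≠ i := fun e => hnd.1 (e ▸ hr)
      have hrj : r ≠ j := fun e => hj (e ▸ List.mem_cons_of_mem i hr)
      have hkeep := hU.mul_blockMass_le hσ hij hC hri hrj
      have hir := hrows i List.mem_cons_self r (List.mem_cons_of_mem i hr) hri.symm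
      have hrows' : ∀ a ∈ rows, ∀ b ∈ rows, a ≠ b → blockMass c a b (Uᵀ * C * U) ≤ P := by
        intro a ha b hb hab
        rw [hU.elem.blockMass_conj (fun e => hnd.1 (e ▸ ha))
          (fun e => hj (e ▸ List.mem_cons_of_mem i ha)) (fun e => hnd.1 (e ▸ hb))
          (fun e => hj (e ▸ List.mem_cons_of_mem i hb))]
        exact hrows a (List.mem_cons_of_mem i ha) b (List.mem_cons_of_mem i hb) hab
      have hih := pow_mul_blockMass_le hσ hσ1 hP h hC₁ hnd.2
        (fun h' => hj (List.mem_cons_of_mem i h')) hrows' r hr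
      nlinarith [mul_le_mul_of_nonneg_left hkeep hpow0]

end Run

section ColumnCyclic

variable {τ : ℕ → ℕ → ℕ} {σ : ℝ}

def colPivots (τ : ℕ → ℕ → ℕ) (j : ℕ) : List (ℕ × ℕ) := (List.range j).map fun a => (τ j a, j)

/-- `memBc m L` says `L = colsPivots τ (m - 1)`. -/
def colsPivots (τ : ℕ → ℕ → ℕ) (k : ℕ) : List (ℕ × ℕ) := (List.range' 1 k).flatMap (colPivots τ)

lemma colPivots_eq_map (τ : ℕ → ℕ → ℕ) (j : ℕ) :
    colPivots τ j = ((List.range j).map (τ j)).map fun r => (r, j) := by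
  simp [colPivots, Function.comp_def]

lemma colsPivots_succ (τ : ℕ → ℕ → ℕ) (k : ℕ) :
    colsPivots τ (k + 1) = colsPivots τ k ++ colPivots τ (k + 1) := by
  simp [colsPivots, List.range'_concat, add_comm]

lemma exists_colsPivots_eq_append (τ : ℕ → ℕ → ℕ) {j k : ℕ} (h : j ≤ k) :
    ∃ l, colsPivots τ k = colsPivots τ j ++ l := by
  obtain ⟨d, rfl⟩ := Nat.exists_eq_add_of_le h
  exact ⟨_, by rw [colsPivots, ← List.range'_append, List.flatMap_append, one_mul]; rfl⟩

lemma mem_map_range_of_bijOn {j r : ℕ} (hτ : ∀ j, Set.BijOn (τ j) (Set.Iio j) (Set.Iio j)) :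
    r ∈ (List.range j).map (τ j) ↔ r < j := by
  simp only [List.mem_map, List.mem_range]
  constructor
  · rintro ⟨a, ha, rfl⟩; exact (hτ j).mapsTo ha
  · intro hr
    obtain ⟨a, ha, rfl⟩ := (hτ j).surjOn hr
    exact ⟨a, ha, rfl⟩

lemma nodup_map_range_of_bijOn {j : ℕ} (hτ : ∀ j, Set.BijOn (τ j) (Set.Iio j) (Set.Iio j)) :
    ((List.range j).map (τ j)).Nodup :=
  List.nodup_range.map_on fun _ ha _ hb h =>
    (hτ j).injOn (List.mem_range.1 ha) (List.mem_range.1 hb) h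

lemma mem_colPivots {j : ℕ} (hτ : ∀ j, Set.BijOn (τ j) (Set.Iio j) (Set.Iio j))
    {p : ℕ × ℕ} (hp : p ∈ colPivots τ j) : p.1 < j ∧ p.2 = j := by
  rw [colPivots_eq_map, List.mem_map] at hp
  obtain ⟨r, hr, rfl⟩ := hp
  exact ⟨(mem_map_range_of_bijOn hτ).1 hr, rfl⟩

lemma mem_colsPivots {k : ℕ} (hτ : ∀ j, Set.BijOn (τ j) (Set.Iio j) (Set.Iio j))
    {p : ℕ × ℕ} (hp : p ∈ colsPivots τ k) : p.1 < p.2 ∧ p.2 ≤ k := by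
  obtain ⟨j, hj, hp⟩ := List.mem_flatMap.1 hp
  have := mem_colPivots hτ hp
  have := List.mem_range'_1.1 hj
  omega

/-- The factor by which the bound on the masses of the off-diagonal blocks among the columns
processed so far grows per column. -/
def growth (n : ℕ) (σ : ℝ) : ℝ := 2 ^ n * ((n + 2) / (σ ^ 2 / 2) ^ n)

def sweepConst (n : ℕ) (σ : ℝ) : ℝ := n ^ 2 * growth n σ ^ n + 2 * n

lemma one_le_div_pow (hσ : 0 < σ) (hσ1 : σ ≤ 1) : 1 ≤ (n + 2) / (σ ^ 2 / 2) ^ n := by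
  have : (σ ^ 2 / 2) ^ n ≤ 1 := pow_le_one₀ (by positivity) (by nlinarith)
  rw [le_div_iff₀ (by positivity)]
  linarith

lemma div_pow_le_growth : (n + 2) / (σ ^ 2 / 2) ^ n ≤ growth n σ :=
  le_mul_of_one_le_left (by positivity) (one_le_pow₀ (by norm_num))

lemma one_le_growth (hσ : 0 < σ) (hσ1 : σ ≤ 1) : 1 ≤ growth n σ :=
  (one_le_div_pow hσ hσ1).trans div_pow_le_growth

lemma one_le_sweepConst (hn : 1 ≤ n) (hσ : 0 < σ) (hσ1 : σ ≤ 1) : 1 ≤ sweepConst n σ := by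
  have : (1 : ℝ) ≤ n := by exact_mod_cast hn
  have := one_le_growth (n := n) hσ hσ1
  unfold sweepConst
  nlinarith [pow_nonneg (zero_le_one.trans this) n]

lemma JacobiRun.blockMass_colPivots_le (hτ : ∀ j, Set.BijOn (τ j) (Set.Iio j) (Set.Iio j))
    (hσ : 0 < σ) (hσ1 : σ ≤ 1) {j : ℕ} (hjn : j ≤ n) {M M' : Matrix (Fin n) (Fin n) ℝ}
    (h : JacobiRun c σ (colPivots τ j) M M') (hM : M.IsSymm) {P : ℝ} (hP0 : 0 ≤ P)
    (hdrop : offSq M - offSq M' ≤ P)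
    (hP : ∀ a < j, ∀ b < j, a ≠ b → blockMass c a b M ≤ P) {r : ℕ} (hr : r < j) :
    blockMass c r j M ≤ (n + 2) / (σ ^ 2 / 2) ^ n * P := by
  rw [colPivots_eq_map] at h
  have hchase := h.pow_mul_blockMass_le hσ hσ1 hP0 hM (nodup_map_range_of_bijOn hτ)
    (fun hj => lt_irrefl j ((mem_map_range_of_bijOn hτ).1 hj))
    (fun a ha b hb => hP a ((mem_map_range_of_bijOn hτ).1 ha) b
      ((mem_map_range_of_bijOn hτ).1 hb)) r ((mem_map_range_of_bijOn hτ).2 hr)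
  rw [List.length_map, List.length_range] at hchase
  have hpow : (σ ^ 2 / 2) ^ n ≤ (σ ^ 2 / 2) ^ j :=
    pow_le_pow_of_le_one (by positivity) (by nlinarith) hjn
  have hjn' : (j : ℝ) ≤ n := by exact_mod_cast hjn
  rw [div_mul_eq_mul_div, le_div_iff₀ (by positivity)]
  nlinarith [blockMass_nonneg c r j M]

lemma blockMass_Iic_le {M : Matrix (Fin n) (Fin n) ℝ} (hM : M.IsSymm) {j : ℕ} {X : ℝ}
    (hP : ∀ a < j, ∀ b < j, a ≠ b → blockMass c a b M ≤ X)
    (hcol : ∀ r < j, blockMass c r j M ≤ X) :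
    ∀ a ∈ Set.Iic j, ∀ b ∈ Set.Iic j, a ≠ b → blockMass c a b M ≤ X := by
  intro a ha b hb hab
  rcases (Set.mem_Iic.1 ha).lt_or_eq with ha | rfl
  · rcases (Set.mem_Iic.1 hb).lt_or_eq with hb | rfl
    exacts [hP a ha b hb hab, hcol a ha]
  · rw [blockMass_comm hM]
    exact hcol b ((Set.mem_Iic.1 hb).lt_of_ne hab.symm)

lemma JacobiRun.blockMass_le_growth_pow (hτ : ∀ j, Set.BijOn (τ j) (Set.Iio j) (Set.Iio j))
    (hσ : 0 < σ) (hσ1 : σ ≤ 1) {D : ℝ} :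
    ∀ {k : ℕ} {A M : Matrix (Fin n) (Fin n) ℝ}, k ≤ n → JacobiRun c σ (colsPivots τ k) A M →
      A.IsSymm → offSq A - offSq M ≤ D →
      ∀ a ≤ k, ∀ b ≤ k, a ≠ b → blockMass c a b M ≤ growth n σ ^ k * D
  | 0, _, _, _, _, _, _ => fun a ha b hb hab => absurd (ha.trans (Nat.zero_le b)) (by omega)
  | k + 1, A, M, hk, h, hA, hD => by
    rw [colsPivots_succ, JacobiRun.append_iff] at h
    obtain ⟨M₀, h₀, h₁⟩ := h
    have hM₀ := h₀.isSymm hA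
    have hD₀ : offSq A - offSq M₀ ≤ D := by linarith [h₁.offSq_le hM₀]
    have hD0 : 0 ≤ D := by linarith [h₀.offSq_le hA]
    have hG := one_le_growth (n := n) hσ hσ1
    set P := growth n σ ^ k * D
    have hDP : D ≤ P := le_mul_of_one_le_left hD0 (one_le_pow₀ hG)
    have hP : ∀ a < k + 1, ∀ b < k + 1, a ≠ b → blockMass c a b M₀ ≤ P := fun a ha b hb =>
      blockMass_le_growth_pow hτ hσ hσ1 (by omega) h₀ hA hD₀ a (by omega) b (by omega)
    have hq := one_le_div_pow (n := n) hσ hσ1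
    set q := ((n : ℝ) + 2) / (σ ^ 2 / 2) ^ n
    have hcol : ∀ r < k + 1, blockMass c r (k + 1) M₀ ≤ q * P := fun r hr =>
      h₁.blockMass_colPivots_le hτ hσ hσ1 hk hM₀ (hD0.trans hDP)
        (by linarith [h₀.offSq_le hA]) hP hr
    have hqP : P ≤ q * P := le_mul_of_one_le_left (hD0.trans hDP) hq
    have hstart := blockMass_Iic_le hM₀ (fun a ha b hb hab => (hP a ha b hb hab).trans hqP) hcol
    have hgrow := h₁.blockMass_le hM₀ (fun p hp => by
        have := mem_colPivots hτ hp
        exact ⟨Set.mem_Iic.2 (by omega), Set.mem_Iic.2 (by omega), by omega⟩) hstart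
    intro a ha b hb hab
    calc blockMass c a b M ≤ 2 ^ (colPivots τ (k + 1)).length * (q * P) := hgrow a ha b hb hab
      _ ≤ 2 ^ n * (q * P) := by
          rw [colPivots_eq_map, List.length_map, List.length_map, List.length_range]
          gcongr
          · norm_num
      _ = growth n σ ^ (k + 1) * D := by simp only [growth, P, q]; ring

end ColumnCyclic

section Sweep

variable {τ : ℕ → ℕ → ℕ} {σ : ℝ} {m : ℕ} {A A' : Matrix (Fin n) (Fin n) ℝ}

lemma JacobiRun.exists_prefix {k j : ℕ} (h : JacobiRun c σ (colsPivots τ k) A A') (hjk : j ≤ k)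
    (hA : A.IsSymm) :
    ∃ M, JacobiRun c σ (colsPivots τ j) A M ∧ offSq A' ≤ offSq M := by
  obtain ⟨l, hl⟩ := exists_colsPivots_eq_append τ hjk
  rw [hl, JacobiRun.append_iff] at h
  obtain ⟨M, hM, h'⟩ := h
  exact ⟨M, hM, h'.offSq_le (hM.isSymm hA)⟩

lemma JacobiRun.sum_blockMass_le (hτ : ∀ j, Set.BijOn (τ j) (Set.Iio j) (Set.Iio j))
    (hσ : 0 < σ) (hσ1 : σ ≤ 1) (hmn : m ≤ n) (h : JacobiRun c σ (colsPivots τ (m - 1)) A A')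
    (hA : A.IsSymm) {j : ℕ} (hj : j < m) :
    ∑ r ∈ range j, blockMass c r j A ≤ n * (growth n σ ^ n * (offSq A - offSq A')) := by
  have hG := one_le_growth (n := n) hσ hσ1
  have hD0 : 0 ≤ offSq A - offSq A' := by linarith [h.offSq_le hA]
  rcases Nat.eq_zero_or_pos j with rfl | hj0
  · simpa using by positivity
  obtain ⟨M', hM', hdrop⟩ := h.exists_prefix (j := j) (by omega) hA
  obtain ⟨j, rfl⟩ : ∃ k, j = k + 1 := ⟨j - 1, by omega⟩
  rw [colsPivots_succ, JacobiRun.append_iff] at hM'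
  obtain ⟨M, hM, hcol⟩ := hM'
  have hMs := hM.isSymm hA
  have hcons := hM.sum_blockMass_eq (T := range (j + 1)) (s := j + 1) (by simp) fun p hp => by
    have := mem_colsPivots hτ hp
    simp only [mem_range]
    omega
  have hP := hM.blockMass_le_growth_pow hτ hσ hσ1 (by omega) hA
    (by linarith [hcol.offSq_le hMs]) (D := offSq A - offSq A')
  have hrow : ∀ r ∈ range (j + 1),
      blockMass c r (j + 1) M ≤ growth n σ ^ n * (offSq A - offSq A') := by
    intro r hr
    calc blockMass c r (j + 1) M
        ≤ (n + 2) / (σ ^ 2 / 2) ^ n * (growth n σ ^ j * (offSq A - offSq A')) :=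
          hcol.blockMass_colPivots_le hτ hσ hσ1 (by omega) hMs (by positivity)
            (by linarith [hM.offSq_le hA, le_mul_of_one_le_left hD0 (one_le_pow₀ (n := j) hG)])
            (fun a ha b hb => hP a (by omega) b (by omega)) (mem_range.1 hr)
      _ ≤ growth n σ ^ (j + 1) * (offSq A - offSq A') := by
          rw [pow_succ' (growth n σ), mul_assoc]
          gcongr
          exact div_pow_le_growth
      _ ≤ growth n σ ^ n * (offSq A - offSq A') :=
          mul_le_mul_of_nonneg_right (pow_le_pow_right₀ hG (by omega)) hD0
  rw [← hcons]
  refine (sum_le_sum hrow).trans ?_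
  rw [sum_const, card_range, nsmul_eq_mul]
  gcongr
  exact_mod_cast (show j + 1 ≤ n by omega)

lemma JacobiRun.blockUpperMass_le (hτ : ∀ j, Set.BijOn (τ j) (Set.Iio j) (Set.Iio j))
    (hm : 2 ≤ m) (h : JacobiRun c σ (colsPivots τ (m - 1)) A A') (hA : A.IsSymm) {r : ℕ}
    (hr : r < m) : blockUpperMass c r A ≤ 2 * (offSq A - offSq A') := by
  obtain ⟨k, hk⟩ : ∃ k, k + 1 = r ∨ (r = 0 ∧ k = 0) := ⟨r - 1, by omega⟩
  obtain ⟨M', hM', hdrop⟩ := h.exists_prefix (j := k + 1) (by omega) hA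
  rw [colsPivots_succ, JacobiRun.append_iff, colPivots, List.range_succ_eq_map, List.map_cons]
    at hM'
  obtain ⟨M, hM, hcol⟩ := hM'
  have huntouched := hM.blockUpperMass_eq (r := r) fun p hp => by
    have := mem_colsPivots hτ hp
    omega
  have hpiv : r = τ (k + 1) 0 ∨ r = k + 1 := by
    have : τ (k + 1) 0 < k + 1 := (hτ (k + 1)).mapsTo (Set.mem_Iio.2 k.succ_pos)
    omega
  have := hcol.offMassOn_piv_le (hM.isSymm hA)
  have := blockUpperMass_le_offMassOn_piv (c := c) hpiv M
  linarith [hM.offSq_le hA]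

lemma JacobiRun.offSq_le_sweepConst_mul (hτ : ∀ j, Set.BijOn (τ j) (Set.Iio j) (Set.Iio j))
    (hσ : 0 < σ) (hσ1 : σ ≤ 1) (hpart : IsPartition n m c)
    (h : JacobiRun c σ (colsPivots τ (m - 1)) A A') (hA : A.IsSymm) :
    offSq A ≤ sweepConst n σ * (offSq A - offSq A') := by
  have hmn := hpart.numBlocks_le
  have hD0 : 0 ≤ offSq A - offSq A' := by linarith [h.offSq_le hA]
  have hGD : 0 ≤ growth n σ ^ n * (offSq A - offSq A') :=
    mul_nonneg (pow_nonneg (zero_le_one.trans (one_le_growth hσ hσ1)) n) hD0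
  have h1 : ∑ j ∈ range m, ∑ r ∈ range j, blockMass c r j A
      ≤ ∑ _j ∈ range m, n * (growth n σ ^ n * (offSq A - offSq A')) :=
    sum_le_sum fun j hj => h.sum_blockMass_le hτ hσ hσ1 hmn hA (mem_range.1 hj)
  have h2 : ∑ r ∈ range m, blockUpperMass c r A ≤ ∑ _r ∈ range m, 2 * (offSq A - offSq A') :=
    sum_le_sum fun r hr => h.blockUpperMass_le hτ hpart.1 hA (mem_range.1 hr)
  rw [sum_const, card_range, nsmul_eq_mul] at h1 h2
  have hm : (m : ℝ) ≤ n := by exact_mod_cast hmn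
  calc offSq A = _ := offSq_eq_sum_blockMass hpart.2.2 A
    _ ≤ m * (n * (growth n σ ^ n * (offSq A - offSq A'))) + m * (2 * (offSq A - offSq A')) :=
        add_le_add h1 h2
    _ ≤ n * (n * (growth n σ ^ n * (offSq A - offSq A'))) + n * (2 * (offSq A - offSq A')) := by
        gcongr
    _ = sweepConst n σ * (offSq A - offSq A') := by unfold sweepConst; ring

end Sweep

lemma gammaUBC_const_le {i j : ℕ} (hi : c i ≤ n) (hj : c j ≤ n) (hj1 : 1 ≤ c j) :
    gammaUBC (fun _ => n) 0 0 ≤ gammaUBC c i j := by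
  dsimp only [gammaUBC]
  have hci : (c i : ℝ) ≤ n := by exact_mod_cast hi
  have hcj : (c j : ℝ) ≤ n := by exact_mod_cast hj
  have hcj1 : (1 : ℝ) ≤ c j := by exact_mod_cast hj1
  have h4 : (4 : ℝ) ^ c i ≤ 4 ^ n := pow_le_pow_right₀ (by norm_num) hi
  have h41 : (1 : ℝ) ≤ 4 ^ c i := one_le_pow₀ (by norm_num)
  refine div_le_div_of_nonneg_left (by norm_num) (Real.sqrt_pos.2 (by nlinarith)) ?_
  exact Real.sqrt_le_sqrt (by nlinarith)

lemma gammaUBC_const_pos (hn : 1 ≤ n) : 0 < gammaUBC (fun _ => n) 0 0 := by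
  have : (1 : ℝ) ≤ 4 ^ n := one_le_pow₀ (by norm_num)
  have : (1 : ℝ) ≤ n := by exact_mod_cast hn
  exact div_pos (by norm_num) (Real.sqrt_pos.2 (by dsimp only; nlinarith))

lemma gammaUBC_const_le_one (hn : 1 ≤ n) : gammaUBC (fun _ => n) 0 0 ≤ 1 := by
  have : (1 : ℝ) ≤ 4 ^ n := one_le_pow₀ (by norm_num)
  have : (1 : ℝ) ≤ n := by exact_mod_cast hn
  have h3 : (3 : ℝ) ≤ √((4 ^ n + 6 * n - 1) * (n + 1)) := Real.le_sqrt_of_sq_le (by nlinarith)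
  exact (div_le_one (by linarith)).2 h3

lemma le_one_sub_one_div_mul {x y C : ℝ} (hC : 0 < C) (h : x ≤ C * (x - y)) :
    y ≤ (1 - 1 / C) * x := by
  have : x / C ≤ x - y := by rw [div_le_iff₀ hC]; linarith
  linarith [show (1 - 1 / C) * x = x - x / C by ring]

/-- Theorem 3.1: convergence bound for one sweep of the cyclic block
Jacobi method under any ordering from `B_c^(m)`, with `UBC_π(ρ)` transformations.
The constant `η` depends only on `(π,ρ)`; the constant `η̃ = ηt n ρ` only on `(n,ρ)`. -/
theorem statement0 :
    ∃ ηt : ℕ → ℝ → ℝ,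
      ∀ (n m : ℕ) (c : ℕ → ℕ) (ρ : ℝ),
        IsPartition n m c → 0 < ρ → ρ ≤ 1 →
        ∃ η : ℝ, 0 ≤ η ∧ η < ηt n ρ ∧ ηt n ρ < 1 ∧
          ∀ L : List (ℕ × ℕ), memBc m L →
            ∀ A A' : Matrix (Fin n) (Fin n) ℝ, A.IsSymm →
              Sweep c ρ L A A' → offSq A' ≤ η * offSq A := by
  refine ⟨fun n ρ => 1 - 1 / (2 * sweepConst n (ρ * gammaUBC (fun _ => n) 0 0)), ?_⟩
  intro n m c ρ hpart hρ0 hρ1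
  have hn : 1 ≤ n := by linarith [hpart.1, hpart.numBlocks_le]
  set σ := ρ * gammaUBC (fun _ => n) 0 0
  have hσ0 : 0 < σ := mul_pos hρ0 (gammaUBC_const_pos hn)
  have hσ1 : σ ≤ 1 := mul_le_one₀ hρ1 (gammaUBC_const_pos hn).le (gammaUBC_const_le_one hn)
  have hC := one_le_sweepConst hn hσ0 hσ1
  refine ⟨1 - 1 / sweepConst n σ, sub_nonneg.2 ((div_le_one (by linarith)).2 hC),
    sub_lt_sub_left (one_div_lt_one_div_of_lt (by linarith) (by linarith)) 1,
    sub_lt_self 1 (by positivity), ?_⟩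
  rintro L ⟨τ, hτ, rfl⟩ A A' hA hsweep
  have hrun : JacobiRun c σ (colsPivots τ (m - 1)) A A' := hsweep.jacobiRun fun p hp => by
    have := mem_colsPivots hτ hp
    exact mul_le_mul_of_nonneg_left (gammaUBC_const_le (hpart.block_le (by omega))
      (hpart.block_le (by omega)) (hpart.2.1 _ (by omega))) hρ0.le
  exact le_one_sub_one_div_mul (by linarith) (hrun.offSq_le_sweepConst_mul hτ hσ0 hσ1 hpart hA)
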